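/- Let 𝒴 ∈ ℝ^{NT}, let 𝒳* be an NT × Tm real matrix, and define for θ = (θ₁,…,θ_T) ∈ (ℝ^m)^T the penalized objective S(θ) = (1/(NT))‖𝒴 − 𝒳*θ‖₂² + (1/T)Σ_{t=1}^{T} p(‖θ_t‖₂), where p : [0,∞) → ℝ is continuous and constant on [c, ∞) for some c > 0 (as holds for SCAD with c = aλ and MCP with c = aλ). Suppose θ̂ is a local minimizer of S and ‖θ̂_t‖₂ > c for every t with θ̂_t ≠ 0. Let V = {θ ∈ (ℝ^m)^T : θ_t = 0 for every t with θ̂_t = 0}. Then θ̂ is a local minimizer of the restriction of the least-squares objective L(θ) = (1/(NT))‖𝒴 − 𝒳*θ‖₂² to the subspace V. -/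
import Mathlib


/-- Oracle-type property: if p is continuous on [0,∞) and constant on [c,∞) (c > 0), θ̂
is a local minimizer of the group-penalized objective
S(θ) = (1/(NT))‖𝒴 − 𝒳*θ‖₂² + (1/T)Σ_t p(‖θ_t‖₂), and ‖θ̂_t‖₂ > c for every nonzero
group t, then θ̂ is a local minimizer of the least-squares objective
L(θ) = (1/(NT))‖𝒴 − 𝒳*θ‖₂² restricted to the subspace
V = {θ : θ_t = 0 whenever θ̂_t = 0}. -/
theorem penalized_local_min_is_restricted_ls_local_min (N T m : ℕ)
    (hN : 0 < N) (hT : 0 < T)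
    (Y : Fin N × Fin T → ℝ)
    (Xstar : Matrix (Fin N × Fin T) (Fin T × Fin m) ℝ)
    (p : ℝ → ℝ) (hpcont : ContinuousOn p (Set.Ici 0))
    (c : ℝ) (hc : 0 < c)
    (hpconst : ∀ x y : ℝ, c ≤ x → c ≤ y → p x = p y)
    (S L : ((Fin T × Fin m) → ℝ) → ℝ)
    (hS : ∀ θ : (Fin T × Fin m) → ℝ,
      S θ = (1 / (N * T : ℝ)) * ∑ r, (Y r - Xstar.mulVec θ r) ^ 2
        + (1 / (T : ℝ)) * ∑ t : Fin T, p (Real.sqrt (∑ j, (θ (t, j)) ^ 2)))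
    (hL : ∀ θ : (Fin T × Fin m) → ℝ,
      L θ = (1 / (N * T : ℝ)) * ∑ r, (Y r - Xstar.mulVec θ r) ^ 2)
    (θhat : (Fin T × Fin m) → ℝ)
    (hmin : IsLocalMin S θhat)
    (hbig : ∀ t : Fin T, (∃ j, θhat (t, j) ≠ 0) →
      c < Real.sqrt (∑ j, (θhat (t, j)) ^ 2))
    (V : Set ((Fin T × Fin m) → ℝ))
    (hV : V = {θ | ∀ t : Fin T, (∀ j, θhat (t, j) = 0) → ∀ j, θ (t, j) = 0}) :
    IsLocalMinOn L V θhat := by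
  have hcontt : ∀ t : Fin T, Continuous (fun θ : (Fin T × Fin m) → ℝ =>
      Real.sqrt (∑ j, (θ (t, j)) ^ 2)) := fun t =>
    Real.continuous_sqrt.comp (continuous_finset_sum _ fun j _ =>
      (continuous_apply (t, j)).pow 2)
  have h2 : ∀ᶠ θ in nhds θhat, ∀ t : Fin T, (∃ j, θhat (t, j) ≠ 0) →
      c < Real.sqrt (∑ j, (θ (t, j)) ^ 2) := by
    rw [Filter.eventually_all]
    intro t
    by_cases ht : ∃ j, θhat (t, j) ≠ 0
    · have := (hcontt t).continuousAt.eventually (eventually_gt_nhds (hbig t ht))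
      exact this.mono fun θ h _ => h
    · filter_upwards with θ h; exact absurd h ht
  have h1 : ∀ᶠ θ in nhds θhat, S θhat ≤ S θ := hmin
  rw [IsLocalMinOn, IsMinFilter]
  filter_upwards [(h1.and h2).filter_mono nhdsWithin_le_nhds,
    eventually_mem_nhdsWithin] with θ ⟨hS', hbig'⟩ hθV
  have hg : (∑ t : Fin T, p (Real.sqrt (∑ j, (θ (t, j)) ^ 2)))
      = ∑ t : Fin T, p (Real.sqrt (∑ j, (θhat (t, j)) ^ 2)) := by
    refine Finset.sum_congr rfl fun t _ => ?_
    by_cases ht : ∃ j, θhat (t, j) ≠ 0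
    · exact hpconst _ _ (le_of_lt (hbig' t ht)) (le_of_lt (hbig t ht))
    · push_neg at ht
      rw [hV] at hθV
      have hθ0 : ∀ j, θ (t, j) = 0 := hθV t ht
      simp [ht, hθ0]
  have e1 := hS θ
  have e2 := hS θhat
  have e3 := hL θ
  have e4 := hL θhat
  rw [e1, e2, hg] at hS'
  rw [e3, e4]
  linarith
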